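/- The excitation-state of a connected graph G is separable across some bipartition of its vertices if and only if G is a complete bipartite graph K_{V_1,V_2}; in that case |G⟩ = |W⟩_{V_1} ⊗ |W⟩_{V_2}, a tensor product of two W states. -/

import Mathlib

open scoped BigOperators

/-- Pure (unnormalized) states of `N` qubits in the computational basis. -/
abbrev QState (N : ℕ) := (Fin N → Fin 2) → ℂ

/-- The excitation-state `|G⟩ = (1/√|E|) Σ_{{v,w} ∈ E} |e_v + e_w⟩` of a graph. -/
noncomputable def graphState {N : ℕ} (G : SimpleGraph (Fin N)) [DecidableRel G.Adj] :
    QState N :=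
  fun x => ((Real.sqrt G.edgeFinset.card : ℂ))⁻¹ *
    ∑ e ∈ G.edgeFinset, if x = (fun i => if i ∈ e then 1 else 0) then 1 else 0

/-- The `W` state on the qubits indexed by `S` (as an amplitude function of the
coordinates in `S`): the normalized uniform superposition of the configurations
with exactly one `1` inside `S`. -/
noncomputable def wOn {N : ℕ} (S : Finset (Fin N)) : QState N :=
  fun x => if (S.filter (fun i => x i = 1)).card = 1 then ((Real.sqrt S.card : ℂ))⁻¹ else 0

/-- `ψ` factorizes (is separable) across the bipartition `S | Sᶜ` of qubits. -/
def FactorizesAcross {N : ℕ} (ψ : QState N) (S : Finset (Fin N)) : Prop :=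
  ∃ φ₁ φ₂ : QState N,
    (∀ x y : Fin N → Fin 2, (∀ i ∈ S, x i = y i) → φ₁ x = φ₁ y) ∧
    (∀ x y : Fin N → Fin 2, (∀ i ∉ S, x i = y i) → φ₂ x = φ₂ y) ∧
    (∀ x, ψ x = φ₁ x * φ₂ x)

/-- `G` is the complete bipartite graph with parts `S` and `Sᶜ`. -/
def IsCompleteBipartiteOn {N : ℕ} (G : SimpleGraph (Fin N)) (S : Finset (Fin N)) : Prop :=
  ∀ v w, G.Adj v w ↔ ((v ∈ S ∧ w ∉ S) ∨ (v ∉ S ∧ w ∈ S))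

/-! The support of a product state across `S | Sᶜ` is a rectangle: if `ψ x ≠ 0` and `ψ y ≠ 0`,
then `ψ` does not vanish at the configuration that agrees with `x` on `S` and with `y` off `S`.
The support of `|G⟩` is the set of edge configurations `e_v + e_w`. Splicing an edge inside a
part with an edge across the cut (one exists by connectivity) gives three `1`s, which is no edge;
splicing an edge at `v ∈ S` with an edge at `w ∉ S` gives `e_v + e_w`, so `v ~ w`. Conversely,
for `K_{S,Sᶜ}` the edge configurations are exactly those with one `1` in each part, and
`|E| = |S| |Sᶜ|` matches the normalizations. -/

open Finset

section

variable {V : Type*} [DecidableEq V]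

/-- The basis configuration `e_v + e_w` of an edge `e = s(v, w)`. -/
def edgeConfig (e : Sym2 V) : V → Fin 2 := fun i => if i ∈ e then 1 else 0

lemma edgeConfig_eq_one_iff {e : Sym2 V} {i : V} : edgeConfig e i = 1 ↔ i ∈ e := by
  unfold edgeConfig; split_ifs <;> simp_all

lemma eq_edgeConfig_iff {x : V → Fin 2} {e : Sym2 V} :
    x = edgeConfig e ↔ ∀ i, x i = 1 ↔ i ∈ e := by
  have fin_two_ext : ∀ a b : Fin 2, (a = 1 ↔ b = 1) → a = b := by decide
  exact ⟨fun h i => h ▸ edgeConfig_eq_one_iff,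
    fun h => funext fun i => fin_two_ext _ _ ((h i).trans edgeConfig_eq_one_iff.symm)⟩

lemma edgeConfig_injective : Function.Injective (edgeConfig : Sym2 V → V → Fin 2) :=
  fun _ _ h => Sym2.ext fun _ => by rw [← edgeConfig_eq_one_iff, h, edgeConfig_eq_one_iff]

lemma filter_mem_sym2_mk_eq_singleton {T : Finset V} {v w : V} (hv : v ∈ T) (hw : w ∉ T) :
    {i ∈ T | i ∈ s(v, w)} = {v} := by
  ext i
  simp only [mem_filter, Sym2.mem_iff, mem_singleton]
  constructor
  · rintro ⟨hi, rfl | rfl⟩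
    · rfl
    · exact absurd hi hw
  · rintro rfl
    exact ⟨hv, Or.inl rfl⟩

end

variable {N : ℕ} {G : SimpleGraph (Fin N)} [DecidableRel G.Adj] {S : Finset (Fin N)}

lemma graphState_apply_edgeConfig {e : Sym2 (Fin N)} (he : e ∈ G.edgeFinset) :
    graphState G (edgeConfig e) = ((Real.sqrt #G.edgeFinset : ℂ))⁻¹ := by
  simp only [graphState, ← edgeConfig.eq_def, edgeConfig_injective.eq_iff,
    sum_ite_eq, if_pos he, mul_one]

lemma graphState_apply_edgeConfig_ne_zero {e : Sym2 (Fin N)} (he : e ∈ G.edgeFinset) :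
    graphState G (edgeConfig e) ≠ 0 := by
  have : (0 : ℝ) < #G.edgeFinset := by exact_mod_cast card_pos.2 ⟨e, he⟩
  rw [graphState_apply_edgeConfig he]
  exact inv_ne_zero (Complex.ofReal_ne_zero.2 (Real.sqrt_pos.2 this).ne')

lemma graphState_apply_eq_zero {x : Fin N → Fin 2}
    (hx : ∀ e ∈ G.edgeFinset, x ≠ edgeConfig e) : graphState G x = 0 := by
  simp only [graphState, ← edgeConfig.eq_def]
  rw [sum_eq_zero fun e he => if_neg (hx e he), mul_zero]

lemma exists_edgeConfig_of_graphState_ne_zero {x : Fin N → Fin 2}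
    (hx : graphState G x ≠ 0) : ∃ e ∈ G.edgeFinset, x = edgeConfig e := by
  by_contra! h
  exact hx (graphState_apply_eq_zero h)

lemma wOn_congr {x y : Fin N → Fin 2} (h : ∀ i ∈ S, x i = y i) : wOn S x = wOn S y := by
  unfold wOn
  rw [filter_congr fun i hi => by rw [h i hi]]

namespace FactorizesAcross

lemma compl {ψ : QState N} (h : FactorizesAcross ψ S) : FactorizesAcross ψ Sᶜ := by
  obtain ⟨φ₁, φ₂, hφ₁, hφ₂, hψ⟩ := h
  refine ⟨φ₂, φ₁, fun x y hxy => hφ₂ x y fun i hi => hxy i (mem_compl.2 hi),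
    fun x y hxy => hφ₁ x y fun i hi => hxy i (by simpa using hi), fun x => ?_⟩
  rw [hψ, mul_comm]

lemma apply_piecewise_ne_zero {ψ : QState N} (h : FactorizesAcross ψ S)
    {x y : Fin N → Fin 2} (hx : ψ x ≠ 0) (hy : ψ y ≠ 0) : ψ (S.piecewise x y) ≠ 0 := by
  obtain ⟨φ₁, φ₂, hφ₁, hφ₂, hψ⟩ := h
  rw [hψ] at hx hy ⊢
  rw [hφ₁ _ x fun i hi => piecewise_eq_of_mem _ _ _ hi,
    hφ₂ _ y fun i hi => piecewise_eq_of_notMem _ _ _ hi]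
  exact mul_ne_zero (left_ne_zero_of_mul hx) (right_ne_zero_of_mul hy)

variable (h : FactorizesAcross (graphState G) S)
include h

lemma exists_edge_mem_iff {e f : Sym2 (Fin N)} (he : e ∈ G.edgeFinset) (hf : f ∈ G.edgeFinset) :
    ∃ g ∈ G.edgeFinset, ∀ i, i ∈ g ↔ if i ∈ S then i ∈ e else i ∈ f := by
  obtain ⟨g, hg, hpw⟩ := exists_edgeConfig_of_graphState_ne_zero <| h.apply_piecewise_ne_zero
    (graphState_apply_edgeConfig_ne_zero he) (graphState_apply_edgeConfig_ne_zero hf)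
  refine ⟨g, hg, fun i => ?_⟩
  rw [← eq_edgeConfig_iff.1 hpw i]
  by_cases hi : i ∈ S <;> simp [hi, edgeConfig_eq_one_iff]

lemma not_adj_of_mem_of_mem {a b u u' : Fin N} (hab : G.Adj a b) (hb : b ∉ S)
    (hu : u ∈ S) (hu' : u' ∈ S) : ¬ G.Adj u u' := by
  intro huu'
  obtain ⟨g, -, hg⟩ := h.exists_edge_mem_iff (e := s(u, u')) (f := s(a, b))
    (G.mem_edgeFinset.2 huu') (G.mem_edgeFinset.2 hab)
  have hg_eq : g = s(u, u') :=
    Sym2.eq_of_ne_mem (G.ne_of_adj huu') ((hg u).2 (by simp [hu])) ((hg u').2 (by simp [hu']))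
      (Sym2.mem_mk_left u u') (Sym2.mem_mk_right u u')
  have hbg : b ∈ g := (hg b).2 (by simp [hb])
  rw [hg_eq, Sym2.mem_iff] at hbg
  rcases hbg with rfl | rfl <;> contradiction

lemma adj_of_mem_of_notMem {v w v' w' : Fin N} (hv : v ∈ S) (hw : w ∉ S)
    (hvv' : G.Adj v v') (hw'w : G.Adj w' w) : G.Adj v w := by
  obtain ⟨g, hgE, hg⟩ := h.exists_edge_mem_iff (e := s(v, v')) (f := s(w', w))
    (G.mem_edgeFinset.2 hvv') (G.mem_edgeFinset.2 hw'w)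
  have hg_eq : g = s(v, w) :=
    Sym2.eq_of_ne_mem (ne_of_mem_of_not_mem hv hw) ((hg v).2 (by simp [hv]))
      ((hg w).2 (by simp [hw])) (Sym2.mem_mk_left v w) (Sym2.mem_mk_right v w)
  rwa [hg_eq, SimpleGraph.mem_edgeFinset, SimpleGraph.mem_edgeSet] at hgE

lemma isCompleteBipartiteOn (hconn : G.Connected) (hS : S.Nonempty) (hS' : S ≠ univ) :
    IsCompleteBipartiteOn G S := by
  obtain ⟨s, hs⟩ := hS
  obtain ⟨t, ht⟩ : Sᶜ.Nonempty := by simpa [nonempty_iff_ne_empty] using hS'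
  have : Nontrivial (Fin N) := nontrivial_of_ne s t (ne_of_mem_of_not_mem hs (mem_compl.1 ht))
  obtain ⟨st⟩ := hconn.preconnected s t
  obtain ⟨⟨⟨a, b⟩, hab⟩, -, ha, hb⟩ :=
    st.exists_boundary_dart (S : Set (Fin N)) (mem_coe.2 hs) (by simpa using ht)
  simp only [mem_coe] at ha hb
  intro v w
  constructor
  · intro hvw
    by_cases hv : v ∈ S <;> by_cases hw : w ∈ S
    · exact absurd hvw (h.not_adj_of_mem_of_mem hab hb hv hw)
    · exact Or.inl ⟨hv, hw⟩
    · exact Or.inr ⟨hv, hw⟩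
    · exact absurd hvw (h.compl.not_adj_of_mem_of_mem hab.symm (by simpa using ha)
        (mem_compl.2 hv) (mem_compl.2 hw))
  · obtain ⟨v', hvv'⟩ := hconn.preconnected.exists_adj_of_nontrivial v
    obtain ⟨w', hww'⟩ := hconn.preconnected.exists_adj_of_nontrivial w
    rintro (⟨hv, hw⟩ | ⟨hv, hw⟩)
    · exact h.adj_of_mem_of_notMem hv hw hvv' hww'.symm
    · exact (h.adj_of_mem_of_notMem hw hv hww' hvv'.symm).symm

end FactorizesAcross

namespace IsCompleteBipartiteOn

variable (hG : IsCompleteBipartiteOn G S)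
include hG

lemma edgeFinset_eq_image : G.edgeFinset = (S ×ˢ Sᶜ).image fun p => s(p.1, p.2) := by
  ext e
  induction e using Sym2.ind with
  | _ a b =>
    rw [SimpleGraph.mem_edgeFinset, SimpleGraph.mem_edgeSet, hG]
    simp only [mem_image, mem_product, mem_compl, Prod.exists, Sym2.eq_iff]
    constructor
    · rintro (⟨ha, hb⟩ | ⟨ha, hb⟩)
      · exact ⟨a, b, ⟨ha, hb⟩, Or.inl ⟨rfl, rfl⟩⟩
      · exact ⟨b, a, ⟨hb, ha⟩, Or.inr ⟨rfl, rfl⟩⟩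
    · rintro ⟨a', b', ⟨ha', hb'⟩, ⟨rfl, rfl⟩ | ⟨rfl, rfl⟩⟩
      · exact Or.inl ⟨ha', hb'⟩
      · exact Or.inr ⟨hb', ha'⟩

lemma card_edgeFinset : #G.edgeFinset = #S * #Sᶜ := by
  rw [hG.edgeFinset_eq_image, card_image_of_injOn, card_product]
  rintro ⟨a, b⟩ hab ⟨a', b'⟩ hab' h
  simp only [coe_product, Set.mem_prod, mem_coe, mem_compl] at hab hab'
  rcases Sym2.eq_iff.1 h with ⟨rfl, rfl⟩ | ⟨rfl, rfl⟩
  · rfl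
  · exact absurd hab.1 hab'.2

lemma card_filter_edgeConfig_eq_one {e : Sym2 (Fin N)} (he : e ∈ G.edgeFinset) :
    #{i ∈ S | edgeConfig e i = 1} = 1 ∧ #{i ∈ Sᶜ | edgeConfig e i = 1} = 1 := by
  induction e using Sym2.ind with
  | _ v w =>
    simp only [edgeConfig_eq_one_iff]
    rcases (hG v w).1 (G.mem_edgeFinset.1 he) with ⟨hv, hw⟩ | ⟨hv, hw⟩
    · rw [filter_mem_sym2_mk_eq_singleton hv hw, Sym2.eq_swap,
        filter_mem_sym2_mk_eq_singleton (mem_compl.2 hw) (by simpa using hv)]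
      simp
    · rw [filter_mem_sym2_mk_eq_singleton (mem_compl.2 hv) (by simpa using hw), Sym2.eq_swap,
        filter_mem_sym2_mk_eq_singleton hw hv]
      simp

lemma exists_edgeConfig_of_card_filter_eq_one {x : Fin N → Fin 2}
    (hS : #{i ∈ S | x i = 1} = 1) (hSc : #{i ∈ Sᶜ | x i = 1} = 1) :
    ∃ e ∈ G.edgeFinset, x = edgeConfig e := by
  obtain ⟨v, hv⟩ := card_eq_one.1 hS
  obtain ⟨w, hw⟩ := card_eq_one.1 hSc
  have one_iff {T : Finset (Fin N)} {u i : Fin N} (hT : {i ∈ T | x i = 1} = {u}) (hi : i ∈ T) :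
      x i = 1 ↔ i = u := by
    simpa [hi] using congrArg (i ∈ ·) hT
  have hvS : v ∈ S := (mem_filter.1 (hv ▸ mem_singleton_self v)).1
  have hwS : w ∉ S := mem_compl.1 (mem_filter.1 (hw ▸ mem_singleton_self w)).1
  refine ⟨s(v, w), G.mem_edgeFinset.2 ((hG v w).2 (Or.inl ⟨hvS, hwS⟩)),
    eq_edgeConfig_iff.2 fun i => ?_⟩
  rw [Sym2.mem_iff]
  by_cases hi : i ∈ S
  · rw [one_iff hv hi]
    exact ⟨Or.inl, by rintro (rfl | rfl) <;> trivial⟩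
  · rw [one_iff hw (mem_compl.2 hi)]
    exact ⟨Or.inr, by rintro (rfl | rfl) <;> trivial⟩

lemma graphState_eq_wOn_mul_wOn (x : Fin N → Fin 2) :
    graphState G x = wOn S x * wOn Sᶜ x := by
  by_cases hx : #{i ∈ S | x i = 1} = 1 ∧ #{i ∈ Sᶜ | x i = 1} = 1
  · obtain ⟨e, he, rfl⟩ := hG.exists_edgeConfig_of_card_filter_eq_one hx.1 hx.2
    rw [graphState_apply_edgeConfig he, wOn, wOn, if_pos hx.1, if_pos hx.2, hG.card_edgeFinset,
      Nat.cast_mul, Real.sqrt_mul (Nat.cast_nonneg _), Complex.ofReal_mul, mul_inv]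
  · rw [graphState_apply_eq_zero fun e he hxe => hx (by
      subst hxe; exact hG.card_filter_edgeConfig_eq_one he)]
    rw [not_and_or] at hx
    rcases hx with hx | hx <;> simp [wOn, hx]

lemma factorizesAcross : FactorizesAcross (graphState G) S :=
  ⟨wOn S, wOn Sᶜ, fun _ _ => wOn_congr, fun _ _ h => wOn_congr fun i hi => h i (mem_compl.1 hi),
    hG.graphState_eq_wOn_mul_wOn⟩

end IsCompleteBipartiteOn

/-- The excitation-state of a connected graph is separable across some
(nontrivial) bipartition of its vertices iff the graph is a complete bipartite
graph `K_{V₁,V₂}`; and in that case `|G⟩ = |W⟩_{V₁} ⊗ |W⟩_{V₂}` is a tensor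
product of two `W` states. -/
theorem stmt7 {N : ℕ} (G : SimpleGraph (Fin N)) [DecidableRel G.Adj]
    (hconn : G.Connected) :
    ((∃ S : Finset (Fin N), S.Nonempty ∧ S ≠ Finset.univ ∧
        FactorizesAcross (graphState G) S) ↔
      (∃ S : Finset (Fin N), S.Nonempty ∧ S ≠ Finset.univ ∧
        IsCompleteBipartiteOn G S)) ∧
    (∀ S : Finset (Fin N), IsCompleteBipartiteOn G S →
      ∀ x, graphState G x = wOn S x * wOn Sᶜ x) :=
  ⟨⟨fun ⟨S, hS, hS', h⟩ => ⟨S, hS, hS', h.isCompleteBipartiteOn hconn hS hS'⟩,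
    fun ⟨S, hS, hS', hG⟩ => ⟨S, hS, hS', hG.factorizesAcross⟩⟩,
    fun _ hG => hG.graphState_eq_wOn_mul_wOn⟩
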